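/- arXiv:1004.2453 — 2 statements merged into one kernel-verified Lean document; each statement's English description precedes it below -/
import Mathlib

section
/- For every nonnegative integer n, (2/π) ∫₀^{π/2} (cos θ)^(2n) dθ = 2^{-n} ∑_{k=0}^{⌊n/2⌋} C(n, 2k) · (2/π) ∫₀^{π/2} (cos θ)^(2k) dθ. -/
/-!
By Wallis' formula the normalised integral `(2/π) ∫₀^{π/2} cos^{2k}` equals `C(2k,k)/4^k`, so
the claim is the binomial identity `C(2n,n) = ∑ₖ 2^{n-2k} C(n,2k) C(2k,k)`. That identity compares
the coefficients of `Xⁿ` in `(1 + X)^{2n} = ((1 + X²) + 2X)ⁿ`: expanding the right side binomially,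
only even powers of `1 + X²` contribute to the middle coefficient.
-/

open Real Polynomial Finset

theorem Finset.sum_range_succ_ite_two_dvd {M : Type*} [AddCommMonoid M] (f : ℕ → M) (n : ℕ) :
    ∑ j ∈ range (n + 1), (if 2 ∣ j then f j else 0) = ∑ k ∈ range (n / 2 + 1), f (2 * k) := by
  rw [← sum_filter]
  refine (sum_nbij' (2 * ·) (· / 2) ?_ ?_ ?_ ?_ fun _ _ => rfl).symm <;>
    simp only [mem_range, mem_filter] <;> intro k hk
  · omega
  · omega
  · omega
  · obtain ⟨_, m, rfl⟩ := hk; omega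

theorem Polynomial.coeff_one_add_X_sq_pow (R : Type*) [CommSemiring R] (j i : ℕ) :
    ((1 + X ^ 2 : R[X]) ^ j).coeff i = if 2 ∣ i then (j.choose (i / 2) : R) else 0 := by
  have hexpand : (1 + X ^ 2 : R[X]) ^ j = expand R 2 ((1 + X) ^ j) := by simp
  rw [hexpand, coeff_expand two_pos]
  split_ifs <;> simp [coeff_one_add_X_pow]

theorem Nat.centralBinom_eq_sum_choose_two_mul (n : ℕ) :
    centralBinom n =
      ∑ k ∈ range (n / 2 + 1), 2 ^ (n - 2 * k) * n.choose (2 * k) * centralBinom k := by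
  have hsplit : (1 + X : ℕ[X]) ^ (2 * n) = ((1 + X ^ 2) + 2 * X) ^ n := by rw [pow_mul]; ring
  have hterm : ∀ j ∈ range (n + 1),
      ((1 + X ^ 2 : ℕ[X]) ^ j * (2 * X) ^ (n - j) * (n.choose j : ℕ[X])).coeff n =
        if 2 ∣ j then 2 ^ (n - j) * n.choose j * centralBinom (j / 2) else 0 := by
    intro j hj
    rw [mem_range] at hj
    rw [show (1 + X ^ 2 : ℕ[X]) ^ j * (2 * X) ^ (n - j) * (n.choose j : ℕ[X]) =
        C (2 ^ (n - j) * n.choose j) * (1 + X ^ 2) ^ j * X ^ (n - j) by simp; ring,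
      coeff_mul_X_pow', if_pos (sub_le n j), Nat.sub_sub_self (by omega), coeff_C_mul,
      coeff_one_add_X_sq_pow]
    split_ifs with h
    · obtain ⟨m, rfl⟩ := h
      simp [centralBinom_eq_two_mul_choose]
    · simp
  have hcoeff := coeff_one_add_X_pow ℕ (2 * n) n
  rw [Nat.cast_id] at hcoeff
  rw [centralBinom_eq_two_mul_choose, ← hcoeff, hsplit, add_pow, finsetSum_coeff,
    sum_congr rfl hterm, sum_range_succ_ite_two_dvd]
  simp

theorem integral_cos_pow_two_mul (k : ℕ) :
    ∫ θ in (0:ℝ)..(π / 2), cos θ ^ (2 * k) = π / 2 * (k.centralBinom / 4 ^ k) := by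
  induction k with
  | zero => simp
  | succ k ih =>
    have hbinom : ((k : ℝ) + 1) * (k + 1).centralBinom = 2 * (2 * k + 1) * k.centralBinom := by
      exact_mod_cast Nat.succ_mul_centralBinom_succ k
    rw [mul_add_one, integral_cos_pow, ih]
    simp only [cos_pi_div_two, sin_zero, zero_pow (Nat.succ_ne_zero _), zero_mul, mul_zero, sub_zero,
      zero_div, zero_add, Nat.cast_mul, Nat.cast_ofNat]
    field_simp
    linear_combination (-2 * (4:ℝ) ^ k) * hbinom

theorem cos_power_integral_recurrence (n : ℕ) :
    (2 / π) * ∫ θ in (0:ℝ)..(π / 2), cos θ ^ (2 * n) =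
      (1 / 2 ^ n : ℝ) * ∑ k ∈ Finset.range (n / 2 + 1),
        (n.choose (2 * k) : ℝ) * ((2 / π) * ∫ θ in (0:ℝ)..(π / 2), cos θ ^ (2 * k)) := by
  have hwallis (k : ℕ) :
      (2 / π) * ∫ θ in (0:ℝ)..(π / 2), cos θ ^ (2 * k) = k.centralBinom / 4 ^ k := by
    rw [integral_cos_pow_two_mul]
    field_simp
  simp_rw [hwallis]
  rw [Nat.centralBinom_eq_sum_choose_two_mul, Nat.cast_sum, sum_div, mul_sum]
  refine sum_congr rfl fun k hk => ?_
  have h2k : 2 * k ≤ n := by rw [mem_range] at hk; omega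
  have h2n : (2:ℝ) ^ n = 2 ^ (n - 2 * k) * 4 ^ k := by
    rw [show (4:ℝ) = 2 ^ 2 by norm_num, ← pow_mul, ← pow_add, Nat.sub_add_cancel h2k]
  have h4n : (4:ℝ) ^ n = 2 ^ n * (2 ^ (n - 2 * k) * 4 ^ k) := by
    rw [← h2n, ← mul_pow]; norm_num
  rw [h4n]
  push_cast
  field_simp
end

section
/- For every nonnegative integer n, (2/π) ∫₀^∞ ∏_{j=1}^{n+1} 1/(x² + (2j−1)²) dx = 1/(2^(2n) · (2n+1) · (n!)²). -/
/-!
Write `F_m(a) = ∫₀^∞ ∏_{i<m} (x² + (a + 2i)²)⁻¹ dx` for `a > 0`. Partial fractions on the two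
extreme factors, `1/((x²+a²)(x²+b²)) = (1/(x²+a²) - 1/(x²+b²)) / (b² - a²)`, give
`F_{m+2}(a) = (F_{m+1}(a) - F_{m+1}(a+2)) / ((a+2m+2)² - a²)`, and `F_1(a) = π/(2a)`.
Induction on `m`, for all `a` at once, yields
`F_{m+1}(a) = (π/2) · C(2m, m) / (4^m · a(a+1)⋯(a+2m))`.
At `a = 1` the Pochhammer product is `(2m+1)! = (2m+1) · C(2m, m) · (m!)²`.
-/

open MeasureTheory Real Finset Polynomial

lemma integrable_inv_sq_add_sq {a : ℝ} (ha : a ≠ 0) :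
    Integrable fun x : ℝ => (x ^ 2 + a ^ 2)⁻¹ := by
  refine ((integrable_inv_one_add_sq.comp_div ha).const_mul (a ^ 2)⁻¹).congr
    (Filter.Eventually.of_forall fun x => ?_)
  field_simp
  ring

lemma integral_Ioi_inv_sq_add_sq {a : ℝ} (ha : 0 < a) :
    ∫ x in Set.Ioi (0 : ℝ), (x ^ 2 + a ^ 2)⁻¹ = π / (2 * a) := by
  have h := integral_comp_mul_left_Ioi (fun y => (1 + y ^ 2)⁻¹) 0 (inv_pos.mpr ha)
  simp only [mul_zero, integral_Ioi_inv_one_add_sq, arctan_zero, sub_zero, smul_eq_mul] at h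
  calc ∫ x in Set.Ioi (0 : ℝ), (x ^ 2 + a ^ 2)⁻¹
      = ∫ x in Set.Ioi (0 : ℝ), (a ^ 2)⁻¹ * (1 + (a⁻¹ * x) ^ 2)⁻¹ :=
        setIntegral_congr_fun measurableSet_Ioi fun x _ => by field_simp; ring
    _ = π / (2 * a) := by rw [integral_const_mul, h]; field_simp

theorem ascPochhammer_succ_eval_left {S : Type*} [CommSemiring S] (n : ℕ) (a : S) :
    (ascPochhammer S (n + 1)).eval a = a * (ascPochhammer S n).eval (a + 1) := by
  rw [ascPochhammer_succ_left, eval_mul, eval_X, eval_comp, eval_add, eval_X, eval_one]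

theorem ascPochhammer_eval_add_two {S : Type*} [CommSemiring S] (n : ℕ) (a : S) :
    a * (a + 1) * (ascPochhammer S n).eval (a + 2) =
      (ascPochhammer S n).eval a * (a + n) * (a + n + 1) := by
  calc a * (a + 1) * (ascPochhammer S n).eval (a + 2)
      = (ascPochhammer S (n + 1 + 1)).eval a := by
        rw [ascPochhammer_succ_eval_left, ascPochhammer_succ_eval_left, add_assoc,
          one_add_one_eq_two, mul_assoc]
    _ = (ascPochhammer S n).eval a * (a + n) * (a + n + 1) := by
        rw [ascPochhammer_succ_eval, ascPochhammer_succ_eval]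
        push_cast
        ring

noncomputable def prodInvSqAddSq (a : ℝ) (m : ℕ) (x : ℝ) : ℝ :=
  ∏ i ∈ range m, (x ^ 2 + (a + 2 * i) ^ 2)⁻¹

namespace prodInvSqAddSq

variable (a : ℝ) (m : ℕ) (x : ℝ)

lemma one : prodInvSqAddSq a 1 x = (x ^ 2 + a ^ 2)⁻¹ := by
  simp [prodInvSqAddSq]

lemma succ : prodInvSqAddSq a (m + 1) x = prodInvSqAddSq a m x * (x ^ 2 + (a + 2 * m) ^ 2)⁻¹ :=
  prod_range_succ _ _

lemma succ' :
    prodInvSqAddSq a (m + 1) x = prodInvSqAddSq (a + 2) m x * (x ^ 2 + a ^ 2)⁻¹ := by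
  simp only [prodInvSqAddSq, prod_range_succ', Nat.cast_add, Nat.cast_one, Nat.cast_zero,
    mul_zero, add_zero]
  congr 1
  exact prod_congr rfl fun i _ => by ring

variable {a}

lemma add_two (ha : 0 < a) :
    prodInvSqAddSq a (m + 2) x =
      (prodInvSqAddSq a (m + 1) x - prodInvSqAddSq (a + 2) (m + 1) x) /
        ((a + 2 * (m + 1)) ^ 2 - a ^ 2) := by
  have hb : (a + 2 * (m + 1)) ^ 2 - a ^ 2 ≠ 0 := by nlinarith [(m.cast_nonneg : (0 : ℝ) ≤ m)]
  have hx : x ^ 2 + a ^ 2 ≠ 0 := by positivity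
  have hx' : x ^ 2 + (a + 2 + 2 * m) ^ 2 ≠ 0 := by positivity
  rw [succ' a (m + 1), succ (a + 2) m, succ' a m]
  field_simp
  ring

lemma integrable (ha : 0 < a) : Integrable (prodInvSqAddSq a (m + 1)) := by
  induction m generalizing a with
  | zero => simpa only [funext (one a)] using integrable_inv_sq_add_sq ha.ne'
  | succ m ih =>
    simpa only [funext (add_two m · ha), Pi.sub_apply] using
      ((ih ha).sub (ih (by linarith))).div_const _

lemma integral_Ioi (ha : 0 < a) :
    ∫ x in Set.Ioi (0 : ℝ), prodInvSqAddSq a (m + 1) x =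
      π / 2 * m.centralBinom / (4 ^ m * (ascPochhammer ℝ (2 * m + 1)).eval a) := by
  induction m generalizing a with
  | zero => simp [funext (one a), integral_Ioi_inv_sq_add_sq ha, div_div]
  | succ m ih =>
    have ha2 : 0 < a + 2 := by linarith
    simp only [funext (add_two m · ha)]
    rw [integral_div, integral_sub (integrable m ha).integrableOn (integrable m ha2).integrableOn,
      ih ha, ih ha2]
    have hc : ((m + 1).centralBinom : ℝ) = 2 * (2 * m + 1) * m.centralBinom / (m + 1) := by
      rw [eq_div_iff (by positivity)]
      exact_mod_cast (mul_comm _ _).trans (Nat.succ_mul_centralBinom_succ m)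
    have hPa : (ascPochhammer ℝ (2 * (m + 1) + 1)).eval a =
        (ascPochhammer ℝ (2 * m + 1)).eval a * (a + 2 * m + 1) * (a + 2 * m + 2) := by
      rw [show 2 * (m + 1) + 1 = 2 * m + 1 + 1 + 1 by ring, ascPochhammer_succ_eval,
        ascPochhammer_succ_eval]
      push_cast
      ring
    have hshift : (ascPochhammer ℝ (2 * m + 1)).eval (a + 2) =
        (ascPochhammer ℝ (2 * m + 1)).eval a * (a + 2 * m + 1) * (a + 2 * m + 2) / (a * (a + 1)) :=
      eq_div_of_mul_eq (by positivity) (by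
        rw [mul_comm, ascPochhammer_eval_add_two]
        push_cast
        ring)
    have hP : 0 < (ascPochhammer ℝ (2 * m + 1)).eval a := ascPochhammer_pos _ _ ha
    have hb : (a + 2 * (m + 1)) ^ 2 - a ^ 2 = 4 * (m + 1) * (a + m + 1) := by ring
    rw [hb, hc, hPa, hshift]
    field_simp
    ring

end prodInvSqAddSq

lemma Nat.factorial_two_mul_add_one (n : ℕ) :
    (2 * n + 1).factorial = (2 * n + 1) * n.centralBinom * n.factorial ^ 2 := by
  rw [Nat.factorial_succ, Nat.centralBinom_eq_two_mul_choose, two_mul,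
    ← Nat.add_choose_mul_factorial_mul_factorial]
  ring

theorem integral_prod_odd_squares (n : ℕ) :
    (2 / π) * ∫ x in Set.Ioi (0:ℝ),
        ∏ j ∈ Finset.Icc 1 (n + 1), (x ^ 2 + (2 * (j:ℝ) - 1) ^ 2)⁻¹ =
      1 / (2 ^ (2 * n) * (2 * n + 1) * (n.factorial : ℝ) ^ 2) := by
  have hprod (x : ℝ) : ∏ j ∈ Finset.Icc 1 (n + 1), (x ^ 2 + (2 * (j:ℝ) - 1) ^ 2)⁻¹ =
      prodInvSqAddSq 1 (n + 1) x := by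
    rw [← Finset.Ico_add_one_right_eq_Icc, Finset.prod_Ico_eq_prod_range, prodInvSqAddSq]
    exact prod_congr (by simp) fun i _ => by push_cast; ring
  rw [funext hprod, prodInvSqAddSq.integral_Ioi n one_pos, ascPochhammer_eval_one,
    Nat.factorial_two_mul_add_one, pow_mul]
  have hc : (n.centralBinom : ℝ) ≠ 0 := by exact_mod_cast n.centralBinom_ne_zero
  push_cast
  field_simp
  norm_num
end
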